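/- arXiv:0906.2388 — 3 statements merged into one kernel-verified Lean document; each statement's English description precedes it below -/
import Mathlib

section
/- Let P be a generic convex polygon with n ≥ 5 vertices, let V_i be a locally maximal-extremal vertex of P, and let X be a vertex of P adjacent to V_{i-1} or to V_{i+1} with X ≠ V_i (i.e. X = V_{i-2} or X = V_{i+2}). Let P′ be the polygon obtained from P by removing the vertex V_i and joining V_{i-1} and V_{i+1} by an edge. If X is locally maximal-extremal in P′, then X is locally maximal-extremal in P. -/
open EuclideanGeometry
open scoped Classical

noncomputable section

/-- The Euclidean plane. -/
abbrev Pt := EuclideanSpace ℝ (Fin 2)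

/-- Signed area determinant of the triangle `a b c` (positive iff `a b c` is
counterclockwise, i.e. `c` lies strictly to the left of the directed line `a → b`). -/
def det2 (a b c : Pt) : ℝ :=
  (b 0 - a 0) * (c 1 - a 1) - (b 1 - a 1) * (c 0 - a 0)

/-- The vertices `V 0, V 1, …, V (n-1)` (indices mod `n`) are distinct and in convex
position, listed counterclockwise: every other vertex lies strictly to the left of
each directed edge. -/
def ConvexCCW {n : ℕ} (V : ZMod n → Pt) : Prop :=
  Function.Injective V ∧
    ∀ i j : ZMod n, j ≠ i → j ≠ i + 1 → 0 < det2 (V i) (V (i + 1)) (V j)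

/-- The polygon is generic: no three vertices are collinear and no four vertices lie
on a common circle. -/
def GenericPoly {n : ℕ} (V : ZMod n → Pt) : Prop :=
  (∀ i j k : ZMod n, i ≠ j → j ≠ k → i ≠ k →
      ¬ Collinear ℝ ({V i, V j, V k} : Set Pt)) ∧
  (∀ i j k l : ZMod n, i ≠ j → i ≠ k → i ≠ l → j ≠ k → j ≠ l → k ≠ l →
      ¬ ∃ (O : Pt) (R : ℝ),
        dist (V i) O = R ∧ dist (V j) O = R ∧ dist (V k) O = R ∧ dist (V l) O = R)

/-- `O i` is the center and `R i` the radius of the circle `C i` through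
`V (i-1)`, `V i`, `V (i+1)`. -/
def IsCircumData {n : ℕ} (V O : ZMod n → Pt) (R : ZMod n → ℝ) : Prop :=
  ∀ i : ZMod n,
    dist (V (i - 1)) (O i) = R i ∧ dist (V i) (O i) = R i ∧
      dist (V (i + 1)) (O i) = R i

/-- The polygon is coherent: each circumcenter `O i` lies in the closed infinite cone
with apex `V i` spanned by the rays from `V i` through `V (i-1)` and `V (i+1)`. -/
def Coherent {n : ℕ} (V O : ZMod n → Pt) : Prop :=
  ∀ i : ZMod n, ∃ s t : ℝ, 0 ≤ s ∧ 0 ≤ t ∧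
    O i - V i = s • (V (i - 1) - V i) + t • (V (i + 1) - V i)

/-- `V i` is locally maximal-extremal: `V (i-2)` and `V (i+2)` lie strictly outside `C i`. -/
def LocMax {n : ℕ} (V O : ZMod n → Pt) (R : ZMod n → ℝ) (i : ZMod n) : Prop :=
  R i < dist (V (i - 2)) (O i) ∧ R i < dist (V (i + 2)) (O i)

/-- `V i` is locally minimal-extremal: `V (i-2)` and `V (i+2)` lie strictly inside `C i`. -/
def LocMin {n : ℕ} (V O : ZMod n → Pt) (R : ZMod n → ℝ) (i : ZMod n) : Prop :=
  dist (V (i - 2)) (O i) < R i ∧ dist (V (i + 2)) (O i) < R i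

/-- `V i` is globally maximal-extremal: the open disk bounded by `C i` contains no vertex. -/
def GlobMax {n : ℕ} (V O : ZMod n → Pt) (R : ZMod n → ℝ) (i : ZMod n) : Prop :=
  ∀ j : ZMod n, R i ≤ dist (V j) (O i)

/-- `V i` is globally minimal-extremal: the open disk bounded by `C i` contains every
vertex other than `V (i-1)`, `V i`, `V (i+1)`. -/
def GlobMin {n : ℕ} (V O : ZMod n → Pt) (R : ZMod n → ℝ) (i : ZMod n) : Prop :=
  ∀ j : ZMod n, j ≠ i - 1 → j ≠ i → j ≠ i + 1 → dist (V j) (O i) < R i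

/-- `V i` is radially maximal-extremal: `R (i-1) < R i > R (i+1)`. -/
def RadMax {n : ℕ} (R : ZMod n → ℝ) (i : ZMod n) : Prop :=
  R (i - 1) < R i ∧ R (i + 1) < R i

/-- `V i` is radially minimal-extremal: `R (i-1) > R i < R (i+1)`. -/
def RadMin {n : ℕ} (R : ZMod n → ℝ) (i : ZMod n) : Prop :=
  R i < R (i - 1) ∧ R i < R (i + 1)

end

noncomputable section

/-- The polygon obtained from `V` by deleting the vertex `V i` and joining `V (i-1)`
to `V (i+1)`; its vertices, listed in order, are `V (i+1), V (i+2), …, V (i+n-1)`. -/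
def removeVertex {n : ℕ} [NeZero n] (V : ZMod n → Pt) (i : ZMod n) :
    ZMod (n - 1) → Pt :=
  fun j => V (i + 1 + (j.val : ZMod n))

end

/-! The circle `C (i+2)` passes through `V (i+1), V (i+2), V (i+3)`, which are also consecutive
in `P'`, so it is the corresponding circle of `P'`; hence `V (i+4)` lies outside it and it
remains to see that `V i` does. For a circle through `a, b, c` with power `p`, a circle through
`c, d` with power `p'`, the power identity
`det(c,d,a) p'(b) = det(c,d,b) p'(a) + det(a,b,c) p(d)` holds, and for four consecutive vertices
of a convex polygon the three determinants have the same sign. With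
`(a, b, c, d) = (V (i-1), V i, V (i+1), V (i+2))`, the point `d` is outside `C i` since `V i`
is locally maximal in `P`, and `a` is outside `C (i+2)` since `V (i+2)` is locally maximal in
`P'`; so `b = V i` is outside `C (i+2)`. The vertex `V (i-2)` is the mirror image. -/

lemma dist_sq_eq_coords (x y : Pt) : dist x y ^ 2 = (x 0 - y 0) ^ 2 + (x 1 - y 1) ^ 2 := by
  simp [EuclideanSpace.dist_sq_eq, Fin.sum_univ_two, Real.dist_eq, sq_abs]

lemma det2_swap (a b c : Pt) : det2 b a c = -det2 a b c := by
  unfold det2; ring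

/-- `x ↦ dist x O' ^ 2 - dist x O ^ 2` is affine and vanishes at `c`; the identity is then the
linear relation `det(d,a) b - det(d,b) a + det(a,b) d = 0` among `a - c, b - c, d - c`. -/
lemma det2_mul_power_eq (a b c d O O' : Pt) (R R' : ℝ)
    (ha : dist a O = R) (hb : dist b O = R) (hc : dist c O = R)
    (hc' : dist c O' = R') (hd' : dist d O' = R') :
    det2 c d a * (dist b O' ^ 2 - R' ^ 2) =
      det2 c d b * (dist a O' ^ 2 - R' ^ 2) + det2 a b c * (dist d O ^ 2 - R ^ 2) := by
  have hsq : ∀ {x y : Pt} {r : ℝ}, dist x y = r → (x 0 - y 0) ^ 2 + (x 1 - y 1) ^ 2 = r ^ 2 :=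
    fun h => h ▸ (dist_sq_eq_coords _ _).symm
  rw [dist_sq_eq_coords, dist_sq_eq_coords, dist_sq_eq_coords]
  linear_combination (norm := (simp only [det2]; ring1))
    det2 c d a * hsq hb - det2 c d b * hsq ha - det2 a b c * hsq hd'
      + (det2 c d a - det2 c d b + det2 a b c) * (hsq hc' - hsq hc)

lemma lt_dist_of_det2_mul_pos {a b c d O O' : Pt} {R R' : ℝ}
    (ha : dist a O = R) (hb : dist b O = R) (hc : dist c O = R)
    (hc' : dist c O' = R') (hd' : dist d O' = R')
    (hab : 0 < det2 c d a * det2 c d b) (hac : 0 < det2 c d a * det2 a b c)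
    (hd : R < dist d O) (ha' : R' < dist a O') : R' < dist b O' := by
  have hpow : ∀ {x y : Pt} {r : ℝ}, 0 ≤ r → r < dist x y → 0 < dist x y ^ 2 - r ^ 2 :=
    fun hr h => sub_pos.2 (pow_lt_pow_left₀ h hr two_ne_zero)
  have hd₂ := hpow (ha ▸ dist_nonneg) hd
  have ha₂ := hpow (hc' ▸ dist_nonneg) ha'
  have hb₂ : 0 < det2 c d a ^ 2 * (dist b O' ^ 2 - R' ^ 2) := by
    rw [sq, mul_assoc, det2_mul_power_eq a b c d O O' R R' ha hb hc hc' hd']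
    linear_combination mul_pos hab ha₂ + mul_pos hac hd₂
  have := pos_of_mul_pos_right hb₂ (sq_nonneg _)
  exact lt_of_pow_lt_pow_left₀ 2 dist_nonneg (by linarith)

lemma eq_of_dist_eq_of_det2_ne_zero {p q r O O' : Pt} {R R' : ℝ} (hpqr : det2 p q r ≠ 0)
    (hp : dist p O = R) (hq : dist q O = R) (hr : dist r O = R)
    (hp' : dist p O' = R') (hq' : dist q O' = R') (hr' : dist r O' = R') :
    O = O' ∧ R = R' := by
  have hpq : p ≠ q := by rintro rfl; exact hpqr (by unfold det2; ring)
  have hO : O = O' := by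
    by_contra hne
    rcases eq_of_dist_eq_of_dist_eq_of_finrank_eq_two finrank_euclideanSpace_fin hne hpq
      hp hq hr hp' hq' hr' with rfl | rfl <;> exact hpqr (by unfold det2; ring)
  exact ⟨hO, hp ▸ hp' ▸ hO ▸ rfl⟩

lemma ConvexCCW.det2_pos_of_consecutive {n : ℕ} {V : ZMod n → Pt} (hV : ConvexCCW V)
    (hn : 4 ≤ n) {k₀ k₁ k₂ k₃ : ZMod n} (h₁ : k₁ = k₀ + 1) (h₂ : k₂ = k₁ + 1)
    (h₃ : k₃ = k₂ + 1) :
    0 < det2 (V k₀) (V k₁) (V k₂) ∧ 0 < det2 (V k₀) (V k₁) (V k₃) ∧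
      0 < det2 (V k₂) (V k₃) (V k₀) ∧ 0 < det2 (V k₂) (V k₃) (V k₁) := by
  have hne : ∀ m : ℕ, 0 < m → m < n → (m : ZMod n) ≠ 0 := fun m hm hmn h =>
    absurd (Nat.le_of_dvd hm ((ZMod.natCast_eq_zero_iff m n).1 h)) (by omega)
  have h1 : (1 : ZMod n) ≠ 0 := by exact_mod_cast hne 1 one_pos (by omega)
  have h2 : (2 : ZMod n) ≠ 0 := by exact_mod_cast hne 2 two_pos (by omega)
  have h3 : (3 : ZMod n) ≠ 0 := by exact_mod_cast hne 3 three_pos (by omega)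
  subst h₁ h₂ h₃
  refine ⟨hV.2 _ _ ?_ ?_, hV.2 _ _ ?_ ?_, hV.2 _ _ ?_ ?_, hV.2 _ _ ?_ ?_⟩ <;> intro h
  · exact h2 (by linear_combination h)
  · exact h1 (by linear_combination h)
  · exact h3 (by linear_combination h)
  · exact h2 (by linear_combination h)
  · exact h2 (by linear_combination -h)
  · exact h3 (by linear_combination -h)
  · exact h1 (by linear_combination -h)
  · exact h2 (by linear_combination -h)

lemma removeVertex_natCast {n : ℕ} [NeZero n] (V : ZMod n → Pt) (i : ZMod n) {k : ℕ}
    (hk : k < n - 1) : removeVertex V i k = V (i + ((k + 1 : ℕ) : ZMod n)) := by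
  rw [removeVertex, ZMod.val_natCast_of_lt hk]
  push_cast
  ring_nf

lemma removeVertex_neg_natCast {n : ℕ} [NeZero n] (V : ZMod n → Pt) (i : ZMod n) {k : ℕ}
    (hk₀ : 0 < k) (hk : k < n) : removeVertex V i (-k) = V (i - k) := by
  have hcast : -(k : ZMod (n - 1)) = ((n - 1 - k : ℕ) : ZMod (n - 1)) := by
    rw [Nat.cast_sub (by omega), ZMod.natCast_self, zero_sub]
  rw [hcast, removeVertex_natCast V i (by omega), show n - 1 - k + 1 = n - k by omega,
    Nat.cast_sub hk.le, ZMod.natCast_self, zero_sub, sub_eq_add_neg]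

section RemoveVertex

variable {n : ℕ} [NeZero n] {V O : ZMod n → Pt} {R : ZMod n → ℝ} {i : ZMod n}
  {O' : ZMod (n - 1) → Pt} {R' : ZMod (n - 1) → ℝ}

lemma locMax_add_two_of_locMax_removeVertex (hn : 5 ≤ n) (hV : ConvexCCW V)
    (hcirc : IsCircumData V O R) (hi : R i < dist (V (i + 2)) (O i))
    (hcirc' : IsCircumData (removeVertex V i) O' R')
    (hmax : LocMax (removeVertex V i) O' R' 1) : LocMax V O R (i + 2) := by
  have e₀ : removeVertex V i 0 = V (i + 1) := by
    simpa using removeVertex_natCast V i (k := 0) (by omega)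
  have e₁ : removeVertex V i 1 = V (i + 2) := by
    simpa using removeVertex_natCast V i (k := 1) (by omega)
  have e₂ : removeVertex V i 2 = V (i + 3) := by
    simpa using removeVertex_natCast V i (k := 2) (by omega)
  have e₃ : removeVertex V i 3 = V (i + 4) := by
    simpa using removeVertex_natCast V i (k := 3) (by omega)
  have e₄ : removeVertex V i (-1) = V (i - 1) := by
    simpa using removeVertex_neg_natCast V i (k := 1) one_pos (by omega)
  obtain ⟨hA, hB, hC⟩ := hcirc i
  obtain ⟨hA₂, hB₂, hC₂⟩ := hcirc (i + 2)
  obtain ⟨hA', hB', hC'⟩ := hcirc' 1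
  rw [show i + 2 - 1 = i + 1 by ring] at hA₂
  rw [show i + 2 + 1 = i + 3 by ring] at hC₂
  rw [sub_self, e₀] at hA'
  rw [e₁] at hB'
  rw [one_add_one_eq_two, e₂] at hC'
  obtain ⟨hD₀, -, hD₂, hD₃⟩ := hV.det2_pos_of_consecutive (k₀ := i - 1) (k₁ := i)
    (k₂ := i + 1) (k₃ := i + 2) (by omega) (by ring) rfl (by ring)
  obtain ⟨hO, hR⟩ := eq_of_dist_eq_of_det2_ne_zero
    (hV.det2_pos_of_consecutive (k₀ := i + 1) (by omega) (by ring) (by ring) rfl).1.ne'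
    hA' hB' hC' hA₂ hB₂ hC₂
  rw [LocMax, hO, hR, show (1 : ZMod (n - 1)) - 2 = -1 by ring,
    show (1 : ZMod (n - 1)) + 2 = 3 by norm_num, e₃, e₄] at hmax
  rw [LocMax, show i + 2 - 2 = i by ring, show i + 2 + 2 = i + 4 by ring]
  exact ⟨lt_dist_of_det2_mul_pos hA hB hC hA₂ hB₂ (mul_pos hD₂ hD₃) (mul_pos hD₂ hD₀) hi
    hmax.1, hmax.2⟩

lemma locMax_sub_two_of_locMax_removeVertex (hn : 5 ≤ n) (hV : ConvexCCW V)
    (hcirc : IsCircumData V O R) (hi : R i < dist (V (i - 2)) (O i))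
    (hcirc' : IsCircumData (removeVertex V i) O' R')
    (hmax : LocMax (removeVertex V i) O' R' (-2)) : LocMax V O R (i - 2) := by
  have e₀ : removeVertex V i 0 = V (i + 1) := by
    simpa using removeVertex_natCast V i (k := 0) (by omega)
  have e₁ : removeVertex V i (-1) = V (i - 1) := by
    simpa using removeVertex_neg_natCast V i (k := 1) one_pos (by omega)
  have e₂ : removeVertex V i (-2) = V (i - 2) := by
    simpa using removeVertex_neg_natCast V i (k := 2) two_pos (by omega)
  have e₃ : removeVertex V i (-3) = V (i - 3) := by
    simpa using removeVertex_neg_natCast V i (k := 3) three_pos (by omega)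
  have e₄ : removeVertex V i (-4) = V (i - 4) := by
    simpa using removeVertex_neg_natCast V i (k := 4) four_pos (by omega)
  obtain ⟨hA, hB, hC⟩ := hcirc i
  obtain ⟨hA₂, hB₂, hC₂⟩ := hcirc (i - 2)
  obtain ⟨hA', hB', hC'⟩ := hcirc' (-2)
  rw [show i - 2 - 1 = i - 3 by ring] at hA₂
  rw [show i - 2 + 1 = i - 1 by ring] at hC₂
  rw [show (-2 : ZMod (n - 1)) - 1 = -3 by ring, e₃] at hA'
  rw [e₂] at hB'
  rw [show (-2 : ZMod (n - 1)) + 1 = -1 by ring, e₁] at hC'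
  obtain ⟨hD₀, hD₁, -, hD₃⟩ := hV.det2_pos_of_consecutive (k₀ := i - 2) (k₁ := i - 1)
    (k₂ := i) (k₃ := i + 1) (by omega) (by ring) (by ring) rfl
  obtain ⟨hO, hR⟩ := eq_of_dist_eq_of_det2_ne_zero
    (hV.det2_pos_of_consecutive (k₀ := i - 3) (by omega) (by ring) (by ring) (by ring)).1.ne'
    hA' hB' hC' hA₂ hB₂ hC₂
  rw [LocMax, hO, hR, show (-2 : ZMod (n - 1)) - 2 = -4 by ring, neg_add_cancel, e₄, e₀]
    at hmax
  rw [LocMax, show i - 2 - 2 = i - 4 by ring, sub_add_cancel]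
  have hab :
      0 < det2 (V (i - 1)) (V (i - 2)) (V (i + 1)) * det2 (V (i - 1)) (V (i - 2)) (V i) := by
    rw [det2_swap (V (i - 2)), det2_swap (V (i - 2)), neg_mul_neg]
    exact mul_pos hD₁ hD₀
  have hac :
      0 < det2 (V (i - 1)) (V (i - 2)) (V (i + 1)) * det2 (V (i + 1)) (V i) (V (i - 1)) := by
    rw [det2_swap (V (i - 2)), det2_swap (V i), neg_mul_neg]
    exact mul_pos hD₁ hD₃
  exact ⟨hmax.1, lt_dist_of_det2_mul_pos hC hB hA hC₂ hB₂ hab hac hi hmax.2⟩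

end RemoveVertex

/-- In `removeVertex V i`, the vertices `V (i + 2)` and `V (i - 2)` have indices `1` and `-2`. -/
theorem neighbor_stays_locally_maximal_general
    (n : ℕ) [NeZero n] (hn : 5 ≤ n)
    (V O : ZMod n → Pt) (R : ZMod n → ℝ)
    (hconv : ConvexCCW V) (hcirc : IsCircumData V O R)
    (i : ZMod n) (hi : LocMax V O R i)
    (O' : ZMod (n - 1) → Pt) (R' : ZMod (n - 1) → ℝ)
    (hcirc' : IsCircumData (removeVertex V i) O' R') :
    (LocMax (removeVertex V i) O' R' 1 → LocMax V O R (i + 2)) ∧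
    (LocMax (removeVertex V i) O' R' (-2) → LocMax V O R (i - 2)) :=
  ⟨locMax_add_two_of_locMax_removeVertex hn hconv hcirc hi.2 hcirc',
    locMax_sub_two_of_locMax_removeVertex hn hconv hcirc hi.1 hcirc'⟩

/-- Let `V i` be locally maximal-extremal in a generic convex polygon `P` with `n ≥ 5`
vertices, and let `P'` be obtained by removing `V i`.  If a second neighbor
`X ∈ {V (i+2), V (i-2)}` of `V i` (i.e. a neighbor of `V (i+1)` or `V (i-1)` other than
`V i`) is locally maximal-extremal in `P'`, then it is locally maximal-extremal in `P`.
In `P' = removeVertex V i`, the vertex `V (i+2)` has index `1` and the vertex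
`V (i-2)` has index `-2`. -/
theorem neighbor_stays_locally_maximal
    (n : ℕ) [NeZero n] [NeZero (n - 1)] (hn : 5 ≤ n)
    (V O : ZMod n → Pt) (R : ZMod n → ℝ)
    (hconv : ConvexCCW V) (hgen : GenericPoly V) (hcirc : IsCircumData V O R)
    (i : ZMod n) (hi : LocMax V O R i)
    (O' : ZMod (n - 1) → Pt) (R' : ZMod (n - 1) → ℝ)
    (hcirc' : IsCircumData (removeVertex V i) O' R') :
    (LocMax (removeVertex V i) O' R' 1 → LocMax V O R (i + 2)) ∧
    (LocMax (removeVertex V i) O' R' (-2) → LocMax V O R (i - 2)) :=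
  neighbor_stays_locally_maximal_general n hn V O R hconv hcirc i hi O' R' hcirc'
end

section
/- Let P be a generic convex polygon with n ≥ 5 vertices, let O_i be the circumcenter of V_{i-1}, V_i, V_{i+1}, and let E(P) be the evolute of P, i.e. the closed polygon with vertex sequence O_1,…,O_n. Let ∠V_i be the left angle of P at V_i and ∠O_i the left angle of E(P) at O_i, each measured with respect to the traversal order. Then: the vertex V_i is locally extremal if and only if ∠V_i − ∠O_i = π or ∠V_i − ∠O_i = −π (i.e. O_i is a cusp of the evolute), and V_i is not locally extremal if and only if ∠V_i − ∠O_i = 0. -/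
open EuclideanGeometry
open scoped Classical

noncomputable section

/-- The angle of a closed polygon at the middle vertex `b` (coming from `a`, leaving
towards `c`), measured on the left-hand side with respect to the direction of
traversal; it equals the unsigned angle `∠ a b c` when the traversal turns left at `b`
and `2π - ∠ a b c` when it turns right. -/
def leftAngle (a b c : Pt) : ℝ :=
  if 0 < det2 a b c then EuclideanGeometry.angle a b c
  else 2 * Real.pi - EuclideanGeometry.angle a b c

/-- The discrete winding number of the closed polygon with vertex sequence `W`:
`wind(W) = (1/2π) ∑ᵢ (π - ∠Wᵢ)`. -/
def wind {n : ℕ} [NeZero n] (W : ZMod n → Pt) : ℝ :=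
  (1 / (2 * Real.pi)) *
    ∑ i : ZMod n, (Real.pi - leftAngle (W (i - 1)) (W i) (W (i + 1)))

/-!
Consecutive circumcentres lie on the perpendicular bisector of the common chord, so
`O (i-1) - O i = μ • rot90 (V (i-1) - V i)` and `O (i+1) - O i = ν • rot90 (V (i+1) - V i)`, and
genericity gives `μ, ν ≠ 0`. The power of `V (i-2)` with respect to `C i` is `-2μ` times a positive
orientation determinant and that of `V (i+2)` is `2ν` times one, so `V i` is locally extremal iff
`μ ν < 0`. As `rot90` is a rotation, the evolute's angle at `O i` is `∠V i` when `μ ν > 0`, while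
for `μ ν < 0` one edge is reversed, the turn changes side and the left angle becomes `∠V i + π`.
-/

open scoped RealInnerProductSpace

def rot90 : Pt →ₗᵢ[ℝ] Pt where
  toFun x := !₂[-x 1, x 0]
  map_add' x y := by ext k; fin_cases k <;> simp [add_comm]
  map_smul' c x := by ext k; fin_cases k <;> simp
  norm_map' x := by simp [EuclideanSpace.norm_eq, Fin.sum_univ_two, add_comm]

lemma inner_rot90_right (x y : Pt) : ⟪x, rot90 y⟫ = y 0 * x 1 - y 1 * x 0 := by
  simp [rot90, PiLp.inner_apply, Fin.sum_univ_two]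
  ring

lemma det2_eq_inner_rot90 (a b c : Pt) : det2 a b c = ⟪a - b, rot90 (c - b)⟫ := by
  rw [inner_rot90_right, det2]
  simp only [PiLp.sub_apply]
  ring

lemma exists_eq_smul_rot90_of_inner_eq_zero {x v : Pt} (hv : v ≠ 0) (h : ⟪x, v⟫ = 0) :
    ∃ μ : ℝ, x = μ • rot90 v := by
  have hv' : v 0 ^ 2 + v 1 ^ 2 ≠ 0 := by
    rw [← Fin.sum_univ_two (fun i => v i ^ 2), ← EuclideanSpace.real_norm_sq_eq]
    exact pow_ne_zero 2 (norm_ne_zero_iff.2 hv)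
  simp only [PiLp.inner_apply, Fin.sum_univ_two, RCLike.inner_apply, conj_trivial] at h
  refine ⟨(v 0 * x 1 - v 1 * x 0) / (v 0 ^ 2 + v 1 ^ 2), ?_⟩
  ext k
  fin_cases k <;> simp [rot90] <;> field_simp
  · linear_combination v 0 * h
  · linear_combination v 1 * h

lemma exists_sub_eq_smul_rot90_of_dist_eq {b c o o' : Pt} (hbc : b ≠ c)
    (ho : dist b o = dist c o) (ho' : dist b o' = dist c o') :
    ∃ μ : ℝ, o' - o = μ • rot90 (c - b) :=
  exists_eq_smul_rot90_of_inner_eq_zero (sub_ne_zero.2 hbc.symm)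
    (EuclideanGeometry.inner_vsub_vsub_of_dist_eq_of_dist_eq ho ho')

lemma dist_sq_sub_dist_sq_eq_inner {E : Type*} [NormedAddCommGroup E] [InnerProductSpace ℝ E]
    {a b o o' : E} (h : dist a o = dist b o) :
    dist a o' ^ 2 - dist b o' ^ 2 = 2 * ⟪a - b, o - o'⟫ := by
  have expand : ∀ p : E, dist p o' ^ 2 = dist p o ^ 2 + 2 * ⟪p - o, o - o'⟫ + ‖o - o'‖ ^ 2 := by
    intro p
    rw [dist_eq_norm, dist_eq_norm, ← norm_add_sq_real, sub_add_sub_cancel]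
  rw [expand, expand, h, inner_sub_left, inner_sub_left, inner_sub_left]
  ring

lemma lt_iff_pos_and_lt_iff_neg_of_sq_sub_sq {d r t k : ℝ} (hd : 0 ≤ d) (hr : 0 ≤ r) (hk : 0 < k)
    (h : d ^ 2 - r ^ 2 = 2 * t * k) : (r < d ↔ 0 < t) ∧ (d < r ↔ t < 0) := by
  constructor <;> constructor <;> intro h' <;> nlinarith

namespace InnerProductGeometry

variable {E : Type*} [NormedAddCommGroup E] [InnerProductSpace ℝ E] {μ ν : ℝ}

lemma angle_smul_smul_of_mul_pos (h : 0 < μ * ν) (x y : E) :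
    InnerProductGeometry.angle (μ • x) (ν • y) = InnerProductGeometry.angle x y := by
  have hμ : μ ≠ 0 := left_ne_zero_of_mul h.ne'
  have hq : 0 < ν / μ := by
    rcases mul_pos_iff.1 h with h | h
    · exact div_pos h.2 h.1
    · exact div_pos_of_neg_of_neg h.2 h.1
  rw [show ν • y = μ • (ν / μ) • y by rw [smul_smul, mul_div_cancel₀ _ hμ],
    angle_smul_smul hμ, angle_smul_right_of_pos _ _ hq]

lemma angle_smul_smul_of_mul_neg (h : μ * ν < 0) (x y : E) :
    InnerProductGeometry.angle (μ • x) (ν • y) = Real.pi - InnerProductGeometry.angle x y := by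
  rw [← neg_neg ν, neg_smul, ← smul_neg,
    angle_smul_smul_of_mul_pos (by linarith [neg_mul_eq_mul_neg μ ν]), angle_neg_right]

end InnerProductGeometry

section rotated

variable {a b c a' b' c' : Pt} {μ ν : ℝ}

lemma angle_eq_of_sub_eq_smul_rot90_of_mul_pos (hu : a' - b' = μ • rot90 (a - b))
    (hw : c' - b' = ν • rot90 (c - b)) (h : 0 < μ * ν) :
    EuclideanGeometry.angle a' b' c' = EuclideanGeometry.angle a b c := by
  rw [EuclideanGeometry.angle, vsub_eq_sub, vsub_eq_sub, hu, hw,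
    InnerProductGeometry.angle_smul_smul_of_mul_pos h, LinearIsometry.angle_map]
  rfl

lemma angle_eq_pi_sub_of_sub_eq_smul_rot90_of_mul_neg (hu : a' - b' = μ • rot90 (a - b))
    (hw : c' - b' = ν • rot90 (c - b)) (h : μ * ν < 0) :
    EuclideanGeometry.angle a' b' c' = Real.pi - EuclideanGeometry.angle a b c := by
  rw [EuclideanGeometry.angle, vsub_eq_sub, vsub_eq_sub, hu, hw,
    InnerProductGeometry.angle_smul_smul_of_mul_neg h, LinearIsometry.angle_map]
  rfl

lemma det2_eq_mul_of_sub_eq_smul_rot90 (hu : a' - b' = μ • rot90 (a - b))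
    (hw : c' - b' = ν • rot90 (c - b)) : det2 a' b' c' = μ * ν * det2 a b c := by
  rw [det2_eq_inner_rot90, det2_eq_inner_rot90, hu, hw, map_smul, real_inner_smul_left,
    real_inner_smul_right, LinearIsometry.inner_map_map, mul_assoc]

lemma leftAngle_eq_of_sub_eq_smul_rot90_of_mul_pos (hu : a' - b' = μ • rot90 (a - b))
    (hw : c' - b' = ν • rot90 (c - b)) (h : 0 < μ * ν) :
    leftAngle a' b' c' = leftAngle a b c := by
  simp only [leftAngle, angle_eq_of_sub_eq_smul_rot90_of_mul_pos hu hw h,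
    det2_eq_mul_of_sub_eq_smul_rot90 hu hw, mul_pos_iff_of_pos_left h]

lemma leftAngle_eq_add_pi_of_sub_eq_smul_rot90_of_mul_neg (hu : a' - b' = μ • rot90 (a - b))
    (hw : c' - b' = ν • rot90 (c - b)) (h : μ * ν < 0) (habc : 0 < det2 a b c) :
    leftAngle a' b' c' = leftAngle a b c + Real.pi := by
  have hdet : ¬ 0 < det2 a' b' c' := by
    rw [det2_eq_mul_of_sub_eq_smul_rot90 hu hw]
    exact (mul_neg_of_neg_of_pos h habc).not_gt
  rw [leftAngle, leftAngle, if_neg hdet, if_pos habc,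
    angle_eq_pi_sub_of_sub_eq_smul_rot90_of_mul_neg hu hw h]
  ring

end rotated

lemma leftAngle_sub_leftAngle_circumcenters {a b c d e o₁ o₂ o₃ : Pt} {r₁ r₂ r₃ : ℝ}
    (ha₁ : dist a o₁ = r₁) (hb₁ : dist b o₁ = r₁) (hc₁ : dist c o₁ = r₁)
    (hb₂ : dist b o₂ = r₂) (hc₂ : dist c o₂ = r₂) (hd₂ : dist d o₂ = r₂)
    (hc₃ : dist c o₃ = r₃) (hd₃ : dist d o₃ = r₃) (he₃ : dist e o₃ = r₃)
    (habc : 0 < det2 a b c) (hbcd : 0 < det2 b c d) (hcde : 0 < det2 c d e)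
    (h₁₂ : o₁ ≠ o₂) (h₂₃ : o₂ ≠ o₃) :
    ((r₂ < dist a o₂ ∧ r₂ < dist e o₂) ∨ (dist a o₂ < r₂ ∧ dist e o₂ < r₂) →
        leftAngle b c d - leftAngle o₁ o₂ o₃ = -Real.pi) ∧
      (¬ ((r₂ < dist a o₂ ∧ r₂ < dist e o₂) ∨ (dist a o₂ < r₂ ∧ dist e o₂ < r₂)) →
        leftAngle b c d - leftAngle o₁ o₂ o₃ = 0) := by
  have hbc : b ≠ c := by rintro rfl; simp [det2] at hbcd
  have hcd : c ≠ d := by rintro rfl; simp [det2] at hcde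
  obtain ⟨μ, hμ⟩ := exists_sub_eq_smul_rot90_of_dist_eq hbc.symm (hc₂.trans hb₂.symm)
    (hc₁.trans hb₁.symm)
  obtain ⟨ν, hν⟩ := exists_sub_eq_smul_rot90_of_dist_eq hcd (hc₂.trans hd₂.symm)
    (hc₃.trans hd₃.symm)
  have hμ0 : μ ≠ 0 := by rintro rfl; exact h₁₂ (sub_eq_zero.1 (by simpa using hμ))
  have hν0 : ν ≠ 0 := by rintro rfl; exact h₂₃ (sub_eq_zero.1 (by simpa using hν)).symm
  have hr₂ : 0 ≤ r₂ := hc₂ ▸ dist_nonneg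
  have power_a : dist a o₂ ^ 2 - r₂ ^ 2 = 2 * (-μ) * det2 a b c := by
    rw [← hb₂, dist_sq_sub_dist_sq_eq_inner (ha₁.trans hb₁.symm), hμ, real_inner_smul_right,
      inner_rot90_right, det2]
    simp only [PiLp.sub_apply]
    ring
  have power_e : dist e o₂ ^ 2 - r₂ ^ 2 = 2 * ν * det2 c d e := by
    rw [← hd₂, dist_sq_sub_dist_sq_eq_inner (he₃.trans hd₃.symm), hν, real_inner_smul_right,
      inner_rot90_right, det2]
    simp only [PiLp.sub_apply]
    ring
  obtain ⟨out_a, in_a⟩ := lt_iff_pos_and_lt_iff_neg_of_sq_sub_sq dist_nonneg hr₂ habc power_a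
  obtain ⟨out_e, in_e⟩ := lt_iff_pos_and_lt_iff_neg_of_sq_sub_sq dist_nonneg hr₂ hcde power_e
  have extremal_iff : (r₂ < dist a o₂ ∧ r₂ < dist e o₂) ∨ (dist a o₂ < r₂ ∧ dist e o₂ < r₂) ↔
      μ * ν < 0 := by
    rw [out_a, in_a, out_e, in_e, neg_pos, neg_lt_zero, mul_neg_iff]
    tauto
  refine ⟨fun h => ?_, fun h => ?_⟩
  · rw [leftAngle_eq_add_pi_of_sub_eq_smul_rot90_of_mul_neg hμ hν (extremal_iff.1 h) hbcd]
    ring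
  · have hpos : 0 < μ * ν :=
      (mul_ne_zero hμ0 hν0).lt_or_gt.resolve_left (mt extremal_iff.2 h)
    rw [leftAngle_eq_of_sub_eq_smul_rot90_of_mul_pos hμ hν hpos, sub_self]

lemma eq_pi_or_eq_neg_pi_iff_and_eq_zero_iff {P : Prop} {x : ℝ}
    (h : (P → x = -Real.pi) ∧ (¬ P → x = 0)) :
    (P ↔ x = Real.pi ∨ x = -Real.pi) ∧ (¬ P ↔ x = 0) := by
  have hπ := Real.pi_pos
  by_cases hP : P
  · rw [h.1 hP]
    exact ⟨iff_of_true hP (Or.inr rfl), iff_of_false (not_not.2 hP) (by linarith)⟩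
  · rw [h.2 hP]
    exact ⟨iff_of_false hP (by rintro (h | h) <;> linarith), iff_of_true hP rfl⟩

lemma ZMod.natCast_ne_zero_of_lt {n k : ℕ} (hk : 0 < k) (hkn : k < n) : (k : ZMod n) ≠ 0 := by
  rw [Ne, ZMod.natCast_eq_zero_iff]
  exact fun h => (Nat.le_of_dvd hk h).not_gt hkn

section polygon

variable {n : ℕ} {V O : ZMod n → Pt} {R : ZMod n → ℝ}

lemma ConvexCCW.det2_pos (hconv : ConvexCCW V) (hn : 3 ≤ n) {j k l : ZMod n}
    (hk : k = j + 1) (hl : l = j + 2) : 0 < det2 (V j) (V k) (V l) := by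
  have h1 : (1 : ZMod n) ≠ 0 := by exact_mod_cast ZMod.natCast_ne_zero_of_lt one_pos (by omega)
  have h2 : (2 : ZMod n) ≠ 0 := by exact_mod_cast ZMod.natCast_ne_zero_of_lt two_pos (by omega)
  subst hk hl
  exact hconv.2 j (j + 2) (fun h => h2 (by linear_combination h))
    (fun h => h1 (by linear_combination h))

lemma IsCircumData.ne_of_genericPoly (hcirc : IsCircumData V O R) (hgen : GenericPoly V)
    (hn : 4 ≤ n) {j k : ZMod n} (hk : k = j + 1) : O j ≠ O k := by
  have h1 : (1 : ZMod n) ≠ 0 := by exact_mod_cast ZMod.natCast_ne_zero_of_lt one_pos (by omega)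
  have h2 : (2 : ZMod n) ≠ 0 := by exact_mod_cast ZMod.natCast_ne_zero_of_lt two_pos (by omega)
  have h3 : (3 : ZMod n) ≠ 0 := by
    exact_mod_cast ZMod.natCast_ne_zero_of_lt (by norm_num : 0 < 3) (by omega)
  subst hk
  intro hO
  obtain ⟨hj₁, hj₂, hj₃⟩ := hcirc j
  obtain ⟨hk₁, -, hk₃⟩ := hcirc (j + 1)
  rw [add_sub_cancel_right, ← hO] at hk₁
  rw [← hO, add_assoc, one_add_one_eq_two] at hk₃
  exact hgen.2 (j - 1) j (j + 1) (j + 2)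
    (fun h => h1 (by linear_combination -h)) (fun h => h2 (by linear_combination -h))
    (fun h => h3 (by linear_combination -h)) (fun h => h1 (by linear_combination -h))
    (fun h => h2 (by linear_combination -h)) (fun h => h1 (by linear_combination -h))
    ⟨O j, R j, hj₁, hj₂, hj₃, hk₃.trans (hk₁.symm.trans hj₂)⟩

end polygon

theorem locally_extremal_iff_evolute_cusp_general
    (n : ℕ) (hn : 5 ≤ n)
    (V O : ZMod n → Pt) (R : ZMod n → ℝ)
    (hconv : ConvexCCW V) (hgen : GenericPoly V) (hcirc : IsCircumData V O R)
    (i : ZMod n) :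
    ((LocMax V O R i ∨ LocMin V O R i) ↔
      (leftAngle (V (i - 1)) (V i) (V (i + 1)) -
          leftAngle (O (i - 1)) (O i) (O (i + 1)) = Real.pi ∨
       leftAngle (V (i - 1)) (V i) (V (i + 1)) -
          leftAngle (O (i - 1)) (O i) (O (i + 1)) = -Real.pi)) ∧
    (¬ (LocMax V O R i ∨ LocMin V O R i) ↔
      leftAngle (V (i - 1)) (V i) (V (i + 1)) -
          leftAngle (O (i - 1)) (O i) (O (i + 1)) = 0) := by
  obtain ⟨ha₁, hb₁, hc₁⟩ := hcirc (i - 1)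
  obtain ⟨hb₂, hc₂, hd₂⟩ := hcirc i
  obtain ⟨hc₃, hd₃, he₃⟩ := hcirc (i + 1)
  rw [sub_sub, one_add_one_eq_two] at ha₁
  rw [sub_add_cancel] at hc₁
  rw [add_sub_cancel_right] at hc₃
  rw [add_assoc, one_add_one_eq_two] at he₃
  have key := leftAngle_sub_leftAngle_circumcenters ha₁ hb₁ hc₁ hb₂ hc₂ hd₂ hc₃ hd₃ he₃
    (hconv.det2_pos (by omega) (by ring) (by ring)) (hconv.det2_pos (by omega) (by ring) (by ring))
    (hconv.det2_pos (by omega) (by ring) (by ring))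
    (hcirc.ne_of_genericPoly hgen (by omega) (by ring))
    (hcirc.ne_of_genericPoly hgen (by omega) rfl)
  exact eq_pi_or_eq_neg_pi_iff_and_eq_zero_iff key

/-- For a generic convex polygon `P` with `n ≥ 5` vertices and its evolute `E(P)`
(the closed polygon of circumcenters `O`): a vertex `V i` is locally extremal iff
`∠Vᵢ - ∠Oᵢ = ±π` (i.e. `O i` is a cusp of the evolute), and `V i` is not locally
extremal iff `∠Vᵢ - ∠Oᵢ = 0`. -/
theorem locally_extremal_iff_evolute_cusp
    (n : ℕ) [NeZero n] (hn : 5 ≤ n)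
    (V O : ZMod n → Pt) (R : ZMod n → ℝ)
    (hconv : ConvexCCW V) (hgen : GenericPoly V) (hcirc : IsCircumData V O R)
    (i : ZMod n) :
    ((LocMax V O R i ∨ LocMin V O R i) ↔
      (leftAngle (V (i - 1)) (V i) (V (i + 1)) -
          leftAngle (O (i - 1)) (O i) (O (i + 1)) = Real.pi ∨
       leftAngle (V (i - 1)) (V i) (V (i + 1)) -
          leftAngle (O (i - 1)) (O i) (O (i + 1)) = -Real.pi)) ∧
    (¬ (LocMax V O R i ∨ LocMin V O R i) ↔
      leftAngle (V (i - 1)) (V i) (V (i + 1)) -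
          leftAngle (O (i - 1)) (O i) (O (i + 1)) = 0) :=
  locally_extremal_iff_evolute_cusp_general n hn V O R hconv hgen hcirc i
end
end

section
/- Let P be a generic convex polygon with exactly 6 vertices and let P_1 and P_2 be the two polygons resulting from a decomposition of P (so P_1 and P_2 are quadrilaterals sharing the cutting diagonal as a common edge). Then s_-(P) ≥ s_-(P_1) + s_-(P_2) − 2. -/
open EuclideanGeometry
open scoped Classical

noncomputable section

/-- The sub-polygon of `V` cut off by the diagonal from `V a` to `V (a + m)`: its
vertex sequence is `V a, V (a+1), …, V (a+m)` (so it has `m + 1` vertices and the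
diagonal is one of its edges). -/
def subPolygon {n : ℕ} [NeZero n] (V : ZMod n → Pt) (a : ZMod n) (m : ℕ) :
    ZMod (m + 1) → Pt :=
  fun j => V (a + (j.val : ZMod n))

end

namespace HexAux

lemma distsq (u v : Pt) : dist u v ^ 2 = (u 0 - v 0)^2 + (u 1 - v 1)^2 := by
  rw [EuclideanSpace.dist_eq, Real.sq_sqrt (by positivity)]
  simp [Fin.sum_univ_two, Real.dist_eq, sq_abs]

example (f : Fin 2 → ℝ) : ((WithLp.equiv 2 (Fin 2 → ℝ)).symm f : Pt) 0 = f 0 := rfl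

lemma eq_of_sq {a b : ℝ} (ha : 0 ≤ a) (hb : 0 ≤ b) (h : a^2 = b^2) : a = b := by nlinarith

lemma le_of_sq {a b : ℝ} (ha : 0 ≤ a) (hb : 0 ≤ b) (h : a^2 ≤ b^2) : a ≤ b := by nlinarith

lemma det2_rot (a b c : Pt) : det2 a b c = det2 b c a := by simp only [det2]; ring
lemma det2_swap (a b c : Pt) : det2 a c b = -det2 a b c := by simp only [det2]; ring
lemma det2_degen (a b : Pt) : det2 a b b = 0 := by simp only [det2]; ring
lemma expand_det (a b c p x y : Pt) :
    det2 a b c * det2 x p y = det2 p b c * det2 x a y + det2 a p c * det2 x b y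
      + det2 a b p * det2 x c y := by
  simp only [det2]; ring

lemma exists_circum (x y p : Pt) (h : det2 x y p ≠ 0) :
    ∃ O R, dist x O = R ∧ dist y O = R ∧ dist p O = R := by
  have hDe : det2 x y p = (y 0 - x 0) * (p 1 - x 1) - (y 1 - x 1) * (p 0 - x 0) := rfl
  set D : ℝ := (y 0 - x 0) * (p 1 - x 1) - (y 1 - x 1) * (p 0 - x 0) with hD
  rw [hDe] at h
  set ox : ℝ := ((x 0^2 + x 1^2) * (y 1 - p 1) + (y 0^2 + y 1^2) * (p 1 - x 1)
      + (p 0^2 + p 1^2) * (x 1 - y 1)) / (2 * D) with hox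
  set oy : ℝ := ((x 0^2 + x 1^2) * (p 0 - y 0) + (y 0^2 + y 1^2) * (x 0 - p 0)
      + (p 0^2 + p 1^2) * (y 0 - x 0)) / (2 * D) with hoy
  set O : Pt := (WithLp.equiv 2 (Fin 2 → ℝ)).symm ![ox, oy] with hO
  have hO0 : O 0 = ox := rfl
  have hO1 : O 1 = oy := rfl
  have hsy : dist y O ^ 2 = dist x O ^ 2 := by
    rw [distsq, distsq, hO0, hO1, hox, hoy]
    field_simp
    ring
  have hsp : dist p O ^ 2 = dist x O ^ 2 := by
    rw [distsq, distsq, hO0, hO1, hox, hoy]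
    field_simp
    ring
  exact ⟨O, dist x O, rfl, eq_of_sq dist_nonneg dist_nonneg hsy,
    eq_of_sq dist_nonneg dist_nonneg hsp⟩

lemma pencil (x y p q O O' : Pt) (R R' : ℝ)
    (hx : dist x O = R) (hy : dist y O = R) (hx' : dist x O' = R') (hy' : dist y O' = R') :
    det2 x y p * ((dist q O)^2 - R^2 - ((dist q O')^2 - R'^2))
      = det2 x y q * ((dist p O)^2 - R^2 - ((dist p O')^2 - R'^2)) := by
  have h1 : dist y O ^ 2 = dist x O ^ 2 := by rw [hy, hx]
  have h2 : dist y O' ^ 2 = dist x O' ^ 2 := by rw [hy', hx']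
  have hR : R^2 = dist x O ^2 := by rw [hx]
  have hR' : R'^2 = dist x O' ^2 := by rw [hx']
  rw [hR, hR']
  simp only [distsq] at h1 h2 ⊢
  simp only [det2]
  linear_combination (-((p 0 - x 0) * (q 1 - x 1) - (p 1 - x 1) * (q 0 - x 0))) * h1 +
    ((p 0 - x 0) * (q 1 - x 1) - (p 1 - x 1) * (q 0 - x 0)) * h2

lemma champion (x y : Pt) :
    ∀ ps : List Pt, ps ≠ [] → (∀ p ∈ ps, 0 < det2 x y p) →
      ∃ c ∈ ps, ∃ Oc Rc, dist x Oc = Rc ∧ dist y Oc = Rc ∧ dist c Oc = Rc ∧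
        ∀ p ∈ ps, Rc ≤ dist p Oc := by
  intro ps
  induction ps with
  | nil => intro h; exact absurd rfl h
  | cons hd tl ih =>
    intro _ hleft
    have hhd : 0 < det2 x y hd := hleft hd (by simp)
    rcases eq_or_ne tl [] with rfl | htl
    · obtain ⟨Oc, Rc, h1, h2, h3⟩ := exists_circum x y hd hhd.ne'
      refine ⟨hd, by simp, Oc, Rc, h1, h2, h3, ?_⟩
      intro p hp
      rcases List.mem_cons.1 hp with rfl | hp
      · exact h3.ge
      · simp at hp
    · obtain ⟨c, hc, Oc, Rc, h1, h2, h3, hall⟩ :=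
        ih htl (fun p hp => hleft p (List.mem_cons_of_mem _ hp))
      by_cases hcmp : Rc ≤ dist hd Oc
      · refine ⟨c, List.mem_cons_of_mem _ hc, Oc, Rc, h1, h2, h3, ?_⟩
        intro p hp
        rcases List.mem_cons.1 hp with rfl | hp
        · exact hcmp
        · exact hall p hp
      · push_neg at hcmp
        obtain ⟨Oh, Rh, g1, g2, g3⟩ := exists_circum x y hd hhd.ne'
        refine ⟨hd, by simp, Oh, Rh, g1, g2, g3, ?_⟩
        have hRc0 : 0 ≤ Rc := h1 ▸ dist_nonneg
        have hRh0 : 0 ≤ Rh := g1 ▸ dist_nonneg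
        have hdc : 0 < det2 x y c := hleft c (List.mem_cons_of_mem _ hc)
        have P1 := pencil x y hd c Oh Oc Rh Rc g1 g2 h1 h2
        have hFhd : dist hd Oh ^2 - Rh^2 = 0 := by rw [g3]; ring
        have hFcc : dist c Oc^2 - Rc^2 = 0 := by rw [h3]; ring
        have hin : dist hd Oc^2 - Rc^2 < 0 := by
          nlinarith [dist_nonneg (x := hd) (y := Oc)]
        have hFhc : 0 < dist c Oh^2 - Rh^2 := by
          nlinarith [mul_pos hdc (neg_pos.2 hin)]
        intro p hp
        rcases List.mem_cons.1 hp with rfl | hp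
        · exact g3.ge
        · have hdp : 0 < det2 x y p := hleft p (List.mem_cons_of_mem _ hp)
          have P2 := pencil x y c p Oh Oc Rh Rc g1 g2 h1 h2
          have hpc : 0 ≤ dist p Oc^2 - Rc^2 := by
            nlinarith [hall p hp, dist_nonneg (x := p) (y := Oc)]
          have hfin : 0 ≤ dist p Oh^2 - Rh^2 := by
            nlinarith [mul_pos hdp hFhc, mul_nonneg hdc.le hpc]
          exact le_of_sq hRh0 dist_nonneg (by nlinarith)

lemma convex3 (V : ZMod 6 → Pt) (hconv : ConvexCCW V) :
    ∀ (a : ZMod 6) (s m : ℕ), 1 ≤ s → s < m → m ≤ 5 →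
      0 < det2 (V a) (V (a + (s : ZMod 6))) (V (a + (m : ZMod 6))) := by
  have edge := hconv.2
  have neqq : ∀ (b : ZMod 6) (u v : ZMod 6), u ≠ v → b + u ≠ b + v :=
    fun b u v h H => h (add_left_cancel H)
  have nea : ∀ (b : ZMod 6) (u : ZMod 6), u ≠ 0 → b + u ≠ b :=
    fun b u h H => h (add_left_cancel (H.trans (add_zero b).symm))
  have idx : ∀ (b u v w : ZMod 6), u + v = w → b + u + v = b + w :=
    fun b u v w h => by rw [add_assoc, h]
  -- shifted edge positivity: 0 < det2 (V (b+u)) (V (b+w)) (V (b+v))  when u+1 = w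
  have sedge : ∀ (b u v w : ZMod 6), u + 1 = w → b + v ≠ b + u → b + v ≠ b + w →
      0 < det2 (V (b + u)) (V (b + w)) (V (b + v)) := by
    intro b u v w huw h1 h2
    have h := edge (b + u) (b + v) h1 (by rwa [idx b u 1 w huw])
    rwa [idx b u 1 w huw] at h
  intro a s m hs hsm hm5
  have hs4 : s ≤ 4 := by omega
  have T23 : ∀ b : ZMod 6, 0 < det2 (V b) (V (b + 2)) (V (b + 3)) := by
    intro b
    have h := sedge b 2 0 3 (by decide) (neqq b 0 2 (by decide)) (neqq b 0 3 (by decide))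
    rw [add_zero] at h
    rw [det2_rot]
    exact h
  interval_cases s <;> interval_cases m <;>
    simp only [Nat.cast_one, Nat.cast_ofNat]
  -- (1,2)
  · have h := sedge a 0 2 1 (by decide) (neqq a 2 0 (by decide)) (neqq a 2 1 (by decide))
    rwa [add_zero] at h
  -- (1,3)
  · have h := sedge a 0 3 1 (by decide) (neqq a 3 0 (by decide)) (neqq a 3 1 (by decide))
    rwa [add_zero] at h
  -- (1,4)
  · have h := sedge a 0 4 1 (by decide) (neqq a 4 0 (by decide)) (neqq a 4 1 (by decide))
    rwa [add_zero] at h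
  -- (1,5)
  · have h := sedge a 0 5 1 (by decide) (neqq a 5 0 (by decide)) (neqq a 5 1 (by decide))
    rwa [add_zero] at h
  -- (2,3)
  · exact T23 a
  -- (2,4)
  · have hT12 : 0 < det2 (V a) (V (a + 1)) (V (a + 2)) := by
      have h := sedge a 0 2 1 (by decide) (neqq a 2 0 (by decide)) (neqq a 2 1 (by decide))
      rwa [add_zero] at h
    have hT13 : 0 < det2 (V a) (V (a + 1)) (V (a + 3)) := by
      have h := sedge a 0 3 1 (by decide) (neqq a 3 0 (by decide)) (neqq a 3 1 (by decide))
      rwa [add_zero] at h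
    have hT14 : 0 < det2 (V a) (V (a + 1)) (V (a + 4)) := by
      have h := sedge a 0 4 1 (by decide) (neqq a 4 0 (by decide)) (neqq a 4 1 (by decide))
      rwa [add_zero] at h
    have hT23 := T23 a
    have hE : 0 < det2 (V (a + 3)) (V (a + 4)) (V a) := by
      have h := sedge a 3 0 4 (by decide) (neqq a 0 3 (by decide)) (neqq a 0 4 (by decide))
      rwa [add_zero] at h
    have iden := expand_det (V a) (V (a + 1)) (V (a + 2)) (V (a + 4)) (V (a + 3)) (V a)
    have d0 : det2 (V (a + 3)) (V a) (V a) = 0 := det2_degen _ _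
    have r1 : det2 (V (a + 3)) (V (a + 1)) (V a) = -det2 (V a) (V (a + 1)) (V (a + 3)) := by
      simp only [det2]; ring
    have r2 : det2 (V a) (V (a + 4)) (V (a + 2)) = -det2 (V a) (V (a + 2)) (V (a + 4)) := by
      simp only [det2]; ring
    have r3 : det2 (V (a + 3)) (V (a + 2)) (V a) = -det2 (V a) (V (a + 2)) (V (a + 3)) := by
      simp only [det2]; ring
    rw [d0, r1, r2, r3] at iden
    nlinarith [iden, mul_pos hT12 hE, mul_pos hT14 hT23, hT13]
  -- (2,5)
  · have h := sedge a 5 2 0 (by decide) (neqq a 2 5 (by decide)) (neqq a 2 0 (by decide))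
    rw [add_zero] at h
    rw [det2_rot, det2_rot]
    exact h
  -- (3,4)
  · have h := sedge a 3 0 4 (by decide) (neqq a 0 3 (by decide)) (neqq a 0 4 (by decide))
    rw [add_zero] at h
    rw [det2_rot]
    exact h
  -- (3,5)
  · have h := sedge a 5 3 0 (by decide) (neqq a 3 5 (by decide)) (neqq a 3 0 (by decide))
    rw [add_zero] at h
    rw [det2_rot, det2_rot]
    exact h
  -- (4,5)
  · have h := sedge a 4 0 5 (by decide) (neqq a 0 4 (by decide)) (neqq a 0 5 (by decide))
    rw [add_zero] at h
    rw [det2_rot]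
    exact h

lemma cast6 : ((6 : ℕ) : ZMod 6) = 0 := by decide

lemma sqle {a b : ℝ} (ha : 0 ≤ a) (h : a ≤ b) : a ^ 2 ≤ b ^ 2 := by nlinarith

lemma rec_lemma (V O : ZMod 6 → Pt) (R : ZMod 6 → ℝ) (hconv : ConvexCCW V) (hcirc : IsCircumData V O R) : ∀ m : ℕ, m ≤ 5 → 2 ≤ m → ∀ a : ZMod 6,
    (∃ O' R', dist (V a) O' = R' ∧ dist (V (a + (m : ZMod 6))) O' = R' ∧
      ∀ j : ZMod 6, R' ≤ dist (V j) O') →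
    ∃ k : ℕ, 1 ≤ k ∧ k ≤ m - 1 ∧ GlobMax V O R (a + (k : ZMod 6)) := by
  intro m
  induction m using Nat.strong_induction_on with
  | _ m ih =>
    intro hm5 hm2 a hinv
    obtain ⟨O₀, R₀, hOa, hOm, hOall⟩ := hinv
    -- the region points
    set ps : List Pt := (List.range (m - 1)).map (fun t => V (a + ((t + 1 : ℕ) : ZMod 6)))
      with hps
    have hne : ps ≠ [] := by
      simp only [hps, ne_eq, List.map_eq_nil_iff, List.range_eq_nil]
      omega
    have hma : (a + (m : ZMod 6)) + ((6 - m : ℕ) : ZMod 6) = a := by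
      rw [add_assoc, ← Nat.cast_add, show m + (6 - m) = 6 by omega, cast6, add_zero]
    have hleft : ∀ p ∈ ps, 0 < det2 (V (a + (m : ZMod 6))) (V a) p := by
      intro p hp
      obtain ⟨t, ht, rfl⟩ := List.mem_map.1 hp
      have ht' : t < m - 1 := List.mem_range.1 ht
      have h := convex3 V hconv (a + (m : ZMod 6)) (6 - m) (6 - m + (t + 1))
        (by omega) (by omega) (by omega)
      rw [hma] at h
      have h2 : (a + (m : ZMod 6)) + ((6 - m + (t + 1) : ℕ) : ZMod 6)
          = a + ((t + 1 : ℕ) : ZMod 6) := by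
        rw [Nat.cast_add, ← add_assoc, hma]
      rw [h2] at h
      exact h
    obtain ⟨c, hc, Oc, Rc, hx, hy, hcc, hall⟩ :=
      champion (V (a + (m : ZMod 6))) (V a) ps hne hleft
    obtain ⟨t₀, ht₀, hct⟩ := List.mem_map.1 hc
    have ht₀' : t₀ < m - 1 := List.mem_range.1 ht₀
    set k₀ : ℕ := t₀ + 1 with hk₀
    have hck : c = V (a + (k₀ : ZMod 6)) := hct.symm
    have hRc0 : 0 ≤ Rc := hx ▸ dist_nonneg
    -- all six vertices are outside-or-on the champion circle
    have allout : ∀ j : ZMod 6, Rc ≤ dist (V j) Oc := by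
      intro j
      have hj : a + (((j - a).val : ℕ) : ZMod 6) = j := by
        rw [ZMod.natCast_val, ZMod.cast_id]
        exact add_sub_cancel a j
      set o : ℕ := (j - a).val with ho
      have ho5 : o < 6 := ZMod.val_lt _
      rcases Nat.lt_or_ge o (m + 1) with hom | hom
      · rcases Nat.eq_zero_or_pos o with h0 | h0
        · -- j = a
          rw [← hj, h0]
          simpa using hy.ge
        · rcases eq_or_ne o m with rfl | hneq
          · rw [← hj]; exact hx.ge
          · -- region point
            have : V j ∈ ps := by
              rw [hps]
              refine List.mem_map.2 ⟨o - 1, List.mem_range.2 (by omega), ?_⟩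
              rw [show o - 1 + 1 = o by omega, hj]
            exact hall _ this
      · -- outside point: pencil with the invariant circle
        have hd : det2 (V (a + (m : ZMod 6))) (V a) (V j) < 0 := by
          have h := convex3 V hconv (a + (m : ZMod 6)) (o - m) (6 - m)
            (by omega) (by omega) (by omega)
          rw [hma] at h
          have h2 : (a + (m : ZMod 6)) + ((o - m : ℕ) : ZMod 6) = j := by
            rw [add_assoc, ← Nat.cast_add, show m + (o - m) = o by omega, hj]
          rw [h2] at h
          rw [det2_swap (V (a + (m : ZMod 6))) (V a) (V j)] at *
          linarith [h, det2_swap (V (a + (m : ZMod 6))) (V j) (V a)]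
        have hdp : 0 < det2 (V (a + (m : ZMod 6))) (V a) c := hleft c hc
        have P := pencil (V (a + (m : ZMod 6))) (V a) c (V j) Oc O₀ Rc R₀ hx hy hOm hOa
        have hR₀0 : 0 ≤ R₀ := hOa ▸ dist_nonneg
        have hcO₀ : 0 ≤ dist c O₀ ^ 2 - R₀ ^ 2 := by
          rw [hck]
          linarith [sqle hR₀0 (hOall (a + (k₀ : ZMod 6)))]
        have hjO₀ : 0 ≤ dist (V j) O₀ ^ 2 - R₀ ^ 2 := by
          linarith [sqle hR₀0 (hOall j)]
        have hcc' : dist c Oc ^ 2 - Rc ^ 2 = 0 := by rw [hcc]; ring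
        have : 0 ≤ dist (V j) Oc ^ 2 - Rc ^ 2 := by
          nlinarith [mul_nonneg (neg_nonneg.2 hd.le) hcO₀]
        exact le_of_sq hRc0 dist_nonneg (by nlinarith)
    -- now split on whether we are at the base case
    rcases eq_or_ne m 2 with rfl | hm2'
    · -- base case: k₀ = 1, transfer the champion circle to the circumdata circle
      have hk1 : k₀ = 1 := by omega
      refine ⟨1, le_refl 1, by omega, ?_⟩
      intro j
      have i1 : a + ((1 : ℕ) : ZMod 6) + 1 = a + ((2 : ℕ) : ZMod 6) := by
        push_cast; ring
      have i2 : a + ((1 : ℕ) : ZMod 6) - 1 = a := by push_cast; ring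
      obtain ⟨g1, g2, g3⟩ := hcirc (a + ((1 : ℕ) : ZMod 6))
      rw [i1] at g3
      rw [i2] at g1
      rw [hck, hk1] at hcc
      have hd : det2 (V a) (V (a + ((2 : ℕ) : ZMod 6))) (V (a + ((1 : ℕ) : ZMod 6))) ≠ 0 := by
        have h := convex3 V hconv a 1 2 (by omega) (by omega) (by omega)
        have hs := det2_swap (V a) (V (a + ((1 : ℕ) : ZMod 6))) (V (a + ((2 : ℕ) : ZMod 6)))
        intro hz
        rw [hz] at hs
        linarith
      have P := pencil (V a) (V (a + ((2 : ℕ) : ZMod 6))) (V (a + ((1 : ℕ) : ZMod 6))) (V j)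
        Oc (O (a + ((1 : ℕ) : ZMod 6))) Rc (R (a + ((1 : ℕ) : ZMod 6))) hy hx g1 g3
      have hz1 : dist (V (a + ((1 : ℕ) : ZMod 6))) Oc ^ 2 - Rc ^ 2 = 0 := by rw [hcc]; ring
      have hz2 : dist (V (a + ((1 : ℕ) : ZMod 6))) (O (a + ((1 : ℕ) : ZMod 6))) ^ 2
          - R (a + ((1 : ℕ) : ZMod 6)) ^ 2 = 0 := by rw [g2]; ring
      have hout : 0 ≤ dist (V j) Oc ^ 2 - Rc ^ 2 := by
        linarith [sqle hRc0 (allout j)]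
      have hR0 : 0 ≤ R (a + ((1 : ℕ) : ZMod 6)) := g2 ▸ dist_nonneg
      have key : dist (V j) Oc ^ 2 - Rc ^ 2
          = dist (V j) (O (a + ((1 : ℕ) : ZMod 6))) ^ 2 - R (a + ((1 : ℕ) : ZMod 6)) ^ 2 := by
        have h0 : det2 (V a) (V (a + ((2 : ℕ) : ZMod 6))) (V (a + ((1 : ℕ) : ZMod 6)))
            * (dist (V j) Oc ^ 2 - Rc ^ 2
              - (dist (V j) (O (a + ((1 : ℕ) : ZMod 6))) ^ 2
                - R (a + ((1 : ℕ) : ZMod 6)) ^ 2)) = 0 := by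
          rw [P]; rw [hz1, hz2]; ring
        rcases mul_eq_zero.1 h0 with h | h
        · exact absurd h hd
        · linarith
      exact le_of_sq hR0 dist_nonneg (by nlinarith)
    · -- recursive case
      rcases eq_or_ne k₀ 1 with hk1 | hk1
      · -- recurse on the region between a+1 and a+m
        have hinv' : ∃ O' R', dist (V (a + ((1 : ℕ) : ZMod 6))) O' = R' ∧
            dist (V ((a + ((1 : ℕ) : ZMod 6)) + (((m - 1 : ℕ)) : ZMod 6))) O' = R' ∧
            ∀ j : ZMod 6, R' ≤ dist (V j) O' := by
          refine ⟨Oc, Rc, ?_, ?_, allout⟩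
          · rw [hck, hk1] at hcc; exact hcc
          · have : (a + ((1 : ℕ) : ZMod 6)) + (((m - 1 : ℕ)) : ZMod 6) = a + (m : ZMod 6) := by
              rw [add_assoc, ← Nat.cast_add, show 1 + (m - 1) = m by omega]
            rw [this]; exact hx
        obtain ⟨k, hk1', hk2', hg⟩ := ih (m - 1) (by omega) (by omega) (by omega)
          (a + ((1 : ℕ) : ZMod 6)) hinv'
        refine ⟨k + 1, by omega, by omega, ?_⟩
        have : (a + ((1 : ℕ) : ZMod 6)) + ((k : ℕ) : ZMod 6) = a + (((k + 1 : ℕ)) : ZMod 6) := by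
          rw [add_assoc, ← Nat.cast_add, Nat.add_comm]
        rwa [this] at hg
      · -- recurse on the region between a and a+k₀
        have hinv' : ∃ O' R', dist (V a) O' = R' ∧
            dist (V (a + ((k₀ : ℕ) : ZMod 6))) O' = R' ∧
            ∀ j : ZMod 6, R' ≤ dist (V j) O' := by
          refine ⟨Oc, Rc, hy, ?_, allout⟩
          rw [hck] at hcc; exact hcc
        obtain ⟨k, hk1', hk2', hg⟩ := ih k₀ (by omega) (by omega) (by omega) a hinv'
        exact ⟨k, hk1', by omega, hg⟩

lemma invBase (V : ZMod 6 → Pt) (hconv : ConvexCCW V) (a : ZMod 6) :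
    ∃ O' R', dist (V a) O' = R' ∧ dist (V (a + ((5 : ℕ) : ZMod 6))) O' = R' ∧
      ∀ j : ZMod 6, R' ≤ dist (V j) O' := by
  set ps : List Pt := (List.range 4).map (fun t => V (a + ((t + 1 : ℕ) : ZMod 6))) with hps
  have hne : ps ≠ [] := by simp [hps]
  have hma : (a + ((5 : ℕ) : ZMod 6)) + ((1 : ℕ) : ZMod 6) = a := by
    rw [add_assoc, ← Nat.cast_add, cast6, add_zero]
  have hleft : ∀ p ∈ ps, 0 < det2 (V (a + ((5 : ℕ) : ZMod 6))) (V a) p := by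
    intro p hp
    obtain ⟨t, ht, rfl⟩ := List.mem_map.1 hp
    have ht' : t < 4 := List.mem_range.1 ht
    have h := convex3 V hconv (a + ((5 : ℕ) : ZMod 6)) 1 (1 + (t + 1))
      (by omega) (by omega) (by omega)
    rw [hma] at h
    have h2 : (a + ((5 : ℕ) : ZMod 6)) + ((1 + (t + 1) : ℕ) : ZMod 6)
        = a + ((t + 1 : ℕ) : ZMod 6) := by
      rw [Nat.cast_add, ← add_assoc, hma]
    rw [h2] at h
    exact h
  obtain ⟨c, hc, Oc, Rc, hx, hy, hcc, hall⟩ :=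
    champion (V (a + ((5 : ℕ) : ZMod 6))) (V a) ps hne hleft
  refine ⟨Oc, Rc, hy, hx, ?_⟩
  intro j
  have hj : a + (((j - a).val : ℕ) : ZMod 6) = j := by
    rw [ZMod.natCast_val, ZMod.cast_id]
    exact add_sub_cancel a j
  set o : ℕ := (j - a).val with ho
  have ho5 : o < 6 := ZMod.val_lt _
  rcases Nat.eq_zero_or_pos o with h0 | h0
  · rw [← hj, h0]
    simpa using hy.ge
  · rcases eq_or_ne o 5 with h5 | h5
    · rw [← hj, h5]; exact hx.ge
    · have : V j ∈ ps := by
        rw [hps]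
        refine List.mem_map.2 ⟨o - 1, List.mem_range.2 (by omega), ?_⟩
        rw [show o - 1 + 1 = o by omega, hj]
      exact hall _ this

lemma two_ears (V O : ZMod 6 → Pt) (R : ZMod 6 → ℝ)
    (hconv : ConvexCCW V) (hcirc : IsCircumData V O R) :
    ∃ u v : ZMod 6, u ≠ v ∧ GlobMax V O R u ∧ GlobMax V O R v := by
  obtain ⟨k₁, hk₁, hk₁', hg₁⟩ := rec_lemma V O R hconv hcirc 5 (le_refl 5) (by omega) 0
    (invBase V hconv 0)
  obtain ⟨k₂, hk₂, hk₂', hg₂⟩ := rec_lemma V O R hconv hcirc 5 (le_refl 5) (by omega)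
    ((0 : ZMod 6) + ((k₁ : ℕ) : ZMod 6)) (invBase V hconv _)
  refine ⟨(0 : ZMod 6) + ((k₁ : ℕ) : ZMod 6),
    (0 : ZMod 6) + ((k₁ : ℕ) : ZMod 6) + ((k₂ : ℕ) : ZMod 6), ?_, hg₁, hg₂⟩
  intro H
  have h2 : ((k₂ : ℕ) : ZMod 6) = 0 := add_eq_left.mp H.symm
  have hk4 : k₂ ≤ 4 := by omega
  interval_cases k₂
  · exact absurd h2 (by decide)
  · exact absurd h2 (by decide)
  · exact absurd h2 (by decide)
  · exact absurd h2 (by decide)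

lemma quad_step (V : ZMod 6 → Pt) (hconv : ConvexCCW V) (hgen : GenericPoly V)
    (a : ZMod 6) (O1 : ZMod 4 → Pt) (R1 : ZMod 4 → ℝ)
    (hc1 : IsCircumData (subPolygon V a 3) O1 R1) (k : ZMod 4)
    (h1 : GlobMax (subPolygon V a 3) O1 R1 k)
    (h2 : GlobMax (subPolygon V a 3) O1 R1 (k + 1)) : False := by
  set W : ZMod 4 → Pt := subPolygon V a 3 with hW
  have hWj : ∀ j : ZMod 4, W j = V (a + ((j.val : ℕ) : ZMod 6)) := fun _ => rfl
  obtain ⟨hck1, hck2, hck3⟩ := hc1 k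
  obtain ⟨hd1, hd2, hd3⟩ := hc1 (k + 1)
  have e1 : k + 1 - 1 = k := by ring
  have e2 : k - 1 = k + 3 := by
    have : (3 : ZMod 4) = -1 := by decide
    rw [this, ← sub_eq_add_neg]
  have e3 : k + 1 + 1 = k + 2 := by ring
  rw [e1] at hd1
  rw [e2] at hck1
  rw [e3] at hd3
  -- the two key outside conditions
  have hR0 : 0 ≤ R1 k := hck2 ▸ dist_nonneg
  have hR0' : 0 ≤ R1 (k + 1) := hd2 ▸ dist_nonneg
  have F1 : 0 ≤ dist (W (k + 2)) (O1 k) ^ 2 - R1 k ^ 2 := by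
    linarith [sqle hR0 (h1 (k + 2))]
  have F2 : 0 ≤ dist (W (k + 3)) (O1 (k + 1)) ^ 2 - R1 (k + 1) ^ 2 := by
    linarith [sqle hR0' (h2 (k + 3))]
  have P := pencil (W k) (W (k + 1)) (W (k + 3)) (W (k + 2)) (O1 k) (O1 (k + 1))
    (R1 k) (R1 (k + 1)) hck2 hck3 hd1 hd2
  have z1 : dist (W (k + 2)) (O1 (k + 1)) ^ 2 - R1 (k + 1) ^ 2 = 0 := by rw [hd3]; ring
  have z2 : dist (W (k + 3)) (O1 k) ^ 2 - R1 k ^ 2 = 0 := by rw [hck1]; ring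
  -- helpers
  have cadd : ∀ (b : ZMod 6) (u v : ℕ),
      b + ((u : ℕ) : ZMod 6) + ((v : ℕ) : ZMod 6) = b + ((u + v : ℕ) : ZMod 6) :=
    fun b u v => by rw [add_assoc, ← Nat.cast_add]
  have W0 : W 0 = V a := by
    rw [hWj 0, show ((0 : ZMod 4).val) = 0 from by decide]
    norm_num
  have W1 : W 1 = V (a + ((1 : ℕ) : ZMod 6)) := by
    rw [hWj 1, show ((1 : ZMod 4).val) = 1 from by decide]
  have W2 : W 2 = V (a + ((2 : ℕ) : ZMod 6)) := by
    rw [hWj 2, show ((2 : ZMod 4).val) = 2 from by decide]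
  have W3 : W 3 = V (a + ((3 : ℕ) : ZMod 6)) := by
    rw [hWj 3, show ((3 : ZMod 4).val) = 3 from by decide]
  have T12 : 0 < det2 (V a) (V (a + ((1 : ℕ) : ZMod 6))) (V (a + ((2 : ℕ) : ZMod 6))) :=
    convex3 V hconv a 1 2 (by omega) (by omega) (by omega)
  have T13 : 0 < det2 (V a) (V (a + ((1 : ℕ) : ZMod 6))) (V (a + ((3 : ℕ) : ZMod 6))) :=
    convex3 V hconv a 1 3 (by omega) (by omega) (by omega)
  have T23 : 0 < det2 (V a) (V (a + ((2 : ℕ) : ZMod 6))) (V (a + ((3 : ℕ) : ZMod 6))) :=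
    convex3 V hconv a 2 3 (by omega) (by omega) (by omega)
  have S123 : 0 < det2 (V (a + ((1 : ℕ) : ZMod 6))) (V (a + ((2 : ℕ) : ZMod 6)))
      (V (a + ((3 : ℕ) : ZMod 6))) := by
    have h := convex3 V hconv (a + ((1 : ℕ) : ZMod 6)) 1 2 (by omega) (by omega) (by omega)
    rw [cadd a 1 1, cadd a 1 2] at h
    norm_num at h
    exact h
  -- positivity of the two determinants, by case analysis on k
  have hk4 : k = 0 ∨ k = 1 ∨ k = 2 ∨ k = 3 := by
    have : ∀ k : ZMod 4, k = 0 ∨ k = 1 ∨ k = 2 ∨ k = 3 := by decide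
    exact this k
  have dAB : 0 < det2 (W k) (W (k + 1)) (W (k + 3)) ∧
      0 < det2 (W k) (W (k + 1)) (W (k + 2)) := by
    rcases hk4 with rfl | rfl | rfl | rfl
    · rw [show (0 : ZMod 4) + 1 = 1 from by decide, show (0 : ZMod 4) + 2 = 2 from by decide,
        show (0 : ZMod 4) + 3 = 3 from by decide, W0, W1, W2, W3]
      exact ⟨T13, T12⟩
    · rw [show (1 : ZMod 4) + 1 = 2 from by decide, show (1 : ZMod 4) + 2 = 3 from by decide,
        show (1 : ZMod 4) + 3 = 0 from by decide, W0, W1, W2, W3]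
      constructor
      · rw [det2_rot, det2_rot]; exact T12
      · exact S123
    · rw [show (2 : ZMod 4) + 1 = 3 from by decide, show (2 : ZMod 4) + 2 = 0 from by decide,
        show (2 : ZMod 4) + 3 = 1 from by decide, W0, W1, W2, W3]
      constructor
      · rw [det2_rot, det2_rot]; exact S123
      · rw [det2_rot, det2_rot]; exact T23
    · rw [show (3 : ZMod 4) + 1 = 0 from by decide, show (3 : ZMod 4) + 2 = 1 from by decide,
        show (3 : ZMod 4) + 3 = 2 from by decide, W0, W1, W2, W3]
      constructor
      · rw [det2_rot]; exact T23
      · rw [det2_rot]; exact T13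
  obtain ⟨dA, dB⟩ := dAB
  -- conclude that W (k+2) lies on the circle C k : four concyclic points
  have pz1 : det2 (W k) (W (k + 1)) (W (k + 3))
      * (dist (W (k + 2)) (O1 (k + 1)) ^ 2 - R1 (k + 1) ^ 2) = 0 :=
    mul_eq_zero_of_right _ z1
  have pz2 : det2 (W k) (W (k + 1)) (W (k + 2))
      * (dist (W (k + 3)) (O1 k) ^ 2 - R1 k ^ 2) = 0 :=
    mul_eq_zero_of_right _ z2
  have hXle : dist (W (k + 2)) (O1 k) ^ 2 - R1 k ^ 2 ≤ 0 := by
    nlinarith [P, pz1, pz2, mul_nonneg dB.le F2]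
  have hX : dist (W (k + 2)) (O1 k) ^ 2 - R1 k ^ 2 = 0 := le_antisymm hXle F1
  have hconc : dist (W (k + 2)) (O1 k) = R1 k :=
    eq_of_sq dist_nonneg hR0 (by linarith)
  -- contradiction with genericity
  have n1 : ∀ u : ℕ, ((u : ℕ) : ZMod 6) ≠ 0 → a ≠ a + ((u : ℕ) : ZMod 6) :=
    fun u h H => h (add_eq_left.mp H.symm)
  have n2 : ∀ u v : ℕ, ((u : ℕ) : ZMod 6) ≠ ((v : ℕ) : ZMod 6) →
      a + ((u : ℕ) : ZMod 6) ≠ a + ((v : ℕ) : ZMod 6) :=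
    fun u v h H => h (add_left_cancel H)
  rcases hk4 with rfl | rfl | rfl | rfl
  · rw [show (0 : ZMod 4) + 1 = 1 from by decide] at hck3
    rw [show (0 : ZMod 4) + 2 = 2 from by decide] at hconc
    rw [show (0 : ZMod 4) + 3 = 3 from by decide] at hck1
    rw [W0] at hck2; rw [W1] at hck3; rw [W2] at hconc; rw [W3] at hck1
    exact hgen.2 a (a + ((1 : ℕ) : ZMod 6)) (a + ((2 : ℕ) : ZMod 6)) (a + ((3 : ℕ) : ZMod 6))
      (n1 1 (by decide)) (n1 2 (by decide)) (n1 3 (by decide))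
      (n2 1 2 (by decide)) (n2 1 3 (by decide)) (n2 2 3 (by decide))
      ⟨O1 0, R1 0, hck2, hck3, hconc, hck1⟩
  · rw [show (1 : ZMod 4) + 1 = 2 from by decide] at hck3
    rw [show (1 : ZMod 4) + 2 = 3 from by decide] at hconc
    rw [show (1 : ZMod 4) + 3 = 0 from by decide] at hck1
    rw [W0] at hck1; rw [W1] at hck2; rw [W2] at hck3; rw [W3] at hconc
    exact hgen.2 a (a + ((1 : ℕ) : ZMod 6)) (a + ((2 : ℕ) : ZMod 6)) (a + ((3 : ℕ) : ZMod 6))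
      (n1 1 (by decide)) (n1 2 (by decide)) (n1 3 (by decide))
      (n2 1 2 (by decide)) (n2 1 3 (by decide)) (n2 2 3 (by decide))
      ⟨O1 1, R1 1, hck1, hck2, hck3, hconc⟩
  · rw [show (2 : ZMod 4) + 1 = 3 from by decide] at hck3
    rw [show (2 : ZMod 4) + 2 = 0 from by decide] at hconc
    rw [show (2 : ZMod 4) + 3 = 1 from by decide] at hck1
    rw [W0] at hconc; rw [W1] at hck1; rw [W2] at hck2; rw [W3] at hck3
    exact hgen.2 a (a + ((1 : ℕ) : ZMod 6)) (a + ((2 : ℕ) : ZMod 6)) (a + ((3 : ℕ) : ZMod 6))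
      (n1 1 (by decide)) (n1 2 (by decide)) (n1 3 (by decide))
      (n2 1 2 (by decide)) (n2 1 3 (by decide)) (n2 2 3 (by decide))
      ⟨O1 2, R1 2, hconc, hck1, hck2, hck3⟩
  · rw [show (3 : ZMod 4) + 1 = 0 from by decide] at hck3
    rw [show (3 : ZMod 4) + 2 = 1 from by decide] at hconc
    rw [show (3 : ZMod 4) + 3 = 2 from by decide] at hck1
    rw [W0] at hck3; rw [W1] at hconc; rw [W2] at hck1; rw [W3] at hck2
    exact hgen.2 a (a + ((1 : ℕ) : ZMod 6)) (a + ((2 : ℕ) : ZMod 6)) (a + ((3 : ℕ) : ZMod 6))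
      (n1 1 (by decide)) (n1 2 (by decide)) (n1 3 (by decide))
      (n2 1 2 (by decide)) (n2 1 3 (by decide)) (n2 2 3 (by decide))
      ⟨O1 3, R1 3, hck3, hconc, hck1, hck2⟩

lemma ncard_le_two {P : ZMod 4 → Prop} (h : ∀ k, P k → P (k + 1) → False) :
    {k : ZMod 4 | P k}.ncard ≤ 2 := by
  have cases4 : ∀ k : ZMod 4, k = 0 ∨ k = 1 ∨ k = 2 ∨ k = 3 := by decide
  have hsub : {k : ZMod 4 | P k} ⊆ ({0, 2} : Set (ZMod 4)) ∨
      {k : ZMod 4 | P k} ⊆ ({1, 3} : Set (ZMod 4)) := by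
    by_cases h0 : P 0
    · left
      have n1 : ¬ P 1 := fun hp => h 0 h0 (by rwa [show (0 : ZMod 4) + 1 = 1 from by decide])
      have n3 : ¬ P 3 := fun hp => h 3 hp (by rwa [show (3 : ZMod 4) + 1 = 0 from by decide])
      intro k hk
      rcases cases4 k with rfl | rfl | rfl | rfl
      · exact Set.mem_insert _ _
      · exact absurd hk n1
      · exact Set.mem_insert_of_mem _ rfl
      · exact absurd hk n3
    · by_cases h2 : P 2
      · left
        have n1 : ¬ P 1 := fun hp => h 1 hp (by rwa [show (1 : ZMod 4) + 1 = 2 from by decide])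
        have n3 : ¬ P 3 := fun hp => h 2 h2 (by rwa [show (2 : ZMod 4) + 1 = 3 from by decide])
        intro k hk
        rcases cases4 k with rfl | rfl | rfl | rfl
        · exact absurd hk h0
        · exact absurd hk n1
        · exact Set.mem_insert_of_mem _ rfl
        · exact absurd hk n3
      · right
        intro k hk
        rcases cases4 k with rfl | rfl | rfl | rfl
        · exact absurd hk h0
        · exact Set.mem_insert _ _
        · exact absurd hk h2
        · exact Set.mem_insert_of_mem _ rfl
  rcases hsub with hs | hs
  · calc {k : ZMod 4 | P k}.ncard ≤ ({0, 2} : Set (ZMod 4)).ncard :=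
        Set.ncard_le_ncard hs (Set.toFinite _)
      _ = 2 := Set.ncard_pair (by decide)
  · calc {k : ZMod 4 | P k}.ncard ≤ ({1, 3} : Set (ZMod 4)).ncard :=
        Set.ncard_le_ncard hs (Set.toFinite _)
      _ = 2 := Set.ncard_pair (by decide)

end HexAux

/-- Decomposing a generic convex hexagon along a main diagonal (from `V a` to
`V (a+3)`) into two quadrilaterals `P₁, P₂` satisfies
`s₋(P) ≥ s₋(P₁) + s₋(P₂) - 2`. -/
theorem hexagon_decomposition_global_max
    (V O : ZMod 6 → Pt) (R : ZMod 6 → ℝ)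
    (hconv : ConvexCCW V) (hgen : GenericPoly V) (hcirc : IsCircumData V O R)
    (a : ZMod 6)
    (O1 : ZMod 4 → Pt) (R1 : ZMod 4 → ℝ)
    (hc1 : IsCircumData (subPolygon V a 3) O1 R1)
    (O2 : ZMod 4 → Pt) (R2 : ZMod 4 → ℝ)
    (hc2 : IsCircumData (subPolygon V (a + 3) 3) O2 R2) :
    {k : ZMod 4 | GlobMax (subPolygon V a 3) O1 R1 k}.ncard +
      {k : ZMod 4 | GlobMax (subPolygon V (a + 3) 3) O2 R2 k}.ncard ≤
    {k : ZMod 6 | GlobMax V O R k}.ncard + 2 := by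
  have hq1 : {k : ZMod 4 | GlobMax (subPolygon V a 3) O1 R1 k}.ncard ≤ 2 :=
    HexAux.ncard_le_two (fun k => HexAux.quad_step V hconv hgen a O1 R1 hc1 k)
  have hq2 : {k : ZMod 4 | GlobMax (subPolygon V (a + 3) 3) O2 R2 k}.ncard ≤ 2 :=
    HexAux.ncard_le_two (fun k => HexAux.quad_step V hconv hgen (a + 3) O2 R2 hc2 k)
  obtain ⟨u, v, huv, hu, hv⟩ := HexAux.two_ears V O R hconv hcirc
  have hhex : 2 ≤ {k : ZMod 6 | GlobMax V O R k}.ncard := by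
    have : 1 < {k : ZMod 6 | GlobMax V O R k}.ncard := by
      rw [Set.one_lt_ncard_iff (Set.toFinite _)]
      exact ⟨u, v, hu, hv, huv⟩
    omega
  omega
end
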